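/- arXiv:1109.2879 — 3 statements merged into one kernel-verified Lean document; each statement's English description precedes it below -/
import Mathlib

section
/- Let N be a lattice and let A₁, A₂ be subgroups of its isometry group O(N), and let A = ⟨A₁, A₂⟩ be the subgroup generated by A₁ and A₂. Then the coinvariant sublattice N_A equals the primitive closure [N_{A₁} + N_{A₂}]_pr of the sublattice generated by the coinvariant sublattices N_{A₁} and N_{A₂}. -/
/-!
STATEMENT 8 (the coinvariant sublattice of a subgroup generated by two subgroups).

A lattice is formalized as a finitely generated free `ℤ`-module `M` together with a
nondegenerate symmetric bilinear form `B : M →ₗ[ℤ] M →ₗ[ℤ] ℤ`.  Isometries are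
`ℤ`-linear automorphisms `g : M ≃ₗ[ℤ] M` preserving `B`; subgroups of the isometry
group `O(N)` are subgroups of the automorphism group `M ≃ₗ[ℤ] M` all of whose elements
preserve `B`.
-/

/-- The invariant sublattice `N^A = {x ∈ N : g x = x for all g ∈ A}`. -/
def invariants {M : Type} [AddCommGroup M]
    (A : Subgroup (M ≃ₗ[ℤ] M)) : Submodule ℤ M where
  carrier := {x | ∀ g ∈ A, g x = x}
  add_mem' := by
    intro a b ha hb g hg
    rw [map_add, ha g hg, hb g hg]
  zero_mem' := by
    intro g hg
    simp
  smul_mem' := by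
    intro c x hx g hg
    rw [map_smul, hx g hg]

/-- The coinvariant sublattice `N_A = (N^A)^⊥ = {x ∈ N : B(x, v) = 0 for all v ∈ N^A}`. -/
def coinvariants {M : Type} [AddCommGroup M]
    (B : M →ₗ[ℤ] M →ₗ[ℤ] ℤ) (A : Subgroup (M ≃ₗ[ℤ] M)) : Submodule ℤ M where
  carrier := {x | ∀ v ∈ invariants A, B x v = 0}
  add_mem' := by
    intro a b ha hb v hv
    rw [map_add, LinearMap.add_apply, ha v hv, hb v hv, add_zero]
  zero_mem' := by
    intro v hv
    simp
  smul_mem' := by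
    intro c x hx v hv
    rw [map_smul, LinearMap.smul_apply, hx v hv, smul_zero]

/-- The primitive closure `[K]_pr = {x ∈ N : n·x ∈ K for some nonzero n ∈ ℤ}` of a
sublattice `K ⊆ N`. -/
def primClosure {M : Type} [AddCommGroup M] (K : Submodule ℤ M) : Submodule ℤ M where
  carrier := {x | ∃ k : ℤ, k ≠ 0 ∧ k • x ∈ K}
  add_mem' := by
    rintro a b ⟨k, hk, hka⟩ ⟨l, hl, hlb⟩
    refine ⟨k * l, mul_ne_zero hk hl, ?_⟩
    rw [smul_add]
    exact K.add_mem (by rw [mul_comm, mul_smul]; exact K.smul_mem l hka)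
      (by rw [mul_smul]; exact K.smul_mem k hlb)
  zero_mem' := ⟨1, one_ne_zero, by simp⟩
  smul_mem' := by
    rintro c x ⟨k, hk, hkx⟩
    exact ⟨k, hk, by rw [smul_comm]; exact K.smul_mem c hkx⟩


/-!
Since `N^A = N^{A₁} ⊓ N^{A₂}`, the claim is that the orthogonal of an intersection of sublattices
is the saturation of the sum of their orthogonals. Coordinates in a basis embed `N` into
`V = ℚ^ι`, and the Gram matrix extends `B` to a form on `V` that is still nondegenerate. Saturating
a sublattice amounts to taking its `ℚ`-span, and the `ℚ`-span of the orthogonal of `U` is the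
orthogonal of the `ℚ`-span of `U`. Over `ℚ` the form identifies `V` with its dual, where
`(W₁ ⊓ W₂)⁰ = W₁⁰ ⊔ W₂⁰`.
-/

open Submodule

theorem invariants_sup {M : Type} [AddCommGroup M] (A₁ A₂ : Subgroup (M ≃ₗ[ℤ] M)) :
    invariants (A₁ ⊔ A₂) = invariants A₁ ⊓ invariants A₂ := by
  ext v
  have h (A : Subgroup (M ≃ₗ[ℤ] M)) :
      v ∈ invariants A ↔ A ≤ MulAction.stabilizer (M ≃ₗ[ℤ] M) v :=
    Iff.rfl
  simp only [h, mem_inf, sup_le_iff]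

theorem coinvariants_eq_orthogonalBilin {M : Type} [AddCommGroup M]
    (B : M →ₗ[ℤ] M →ₗ[ℤ] ℤ) (A : Subgroup (M ≃ₗ[ℤ] M)) :
    coinvariants B A = (invariants A).orthogonalBilin B.flip :=
  rfl

theorem Submodule.orthogonalBilin_flip_inf {K V : Type*} [Field K] [AddCommGroup V]
    [Module K V] [FiniteDimensional K V] {B : V →ₗ[K] V →ₗ[K] K} (hB : B.SeparatingLeft)
    (W₁ W₂ : Submodule K V) :
    (W₁ ⊓ W₂).orthogonalBilin B.flip = W₁.orthogonalBilin B.flip ⊔ W₂.orthogonalBilin B.flip := by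
  have hB' : LinearMap.BilinForm.Nondegenerate B := .ofSeparatingLeft hB
  have h (W : Submodule K V) :
      W.orthogonalBilin B.flip =
        W.dualAnnihilator.comap (LinearMap.BilinForm.toDual B hB' : V →ₗ[K] Module.Dual K V) := by
    ext p
    simp [mem_dualAnnihilator, LinearMap.BilinForm.toDual_def]
  simp only [h, Subspace.dualAnnihilator_inf_eq, comap_equiv_eq_map_symm, Submodule.map_sup]

section RationalSpan

variable {M : Type} {V : Type*} [AddCommGroup M] [AddCommGroup V] [Module ℚ V] (f : M →ₗ[ℤ] V)

theorem exists_zsmul_eq_of_mem_span_image {K : Submodule ℤ M} {v : V}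
    (hv : v ∈ span ℚ (f '' K)) : ∃ n : ℤ, n ≠ 0 ∧ ∃ k ∈ K, f k = n • v := by
  obtain ⟨y, hy, z, rfl⟩ := (IsLocalization.mem_span_iff (nonZeroDivisors ℤ)).mp hv
  rw [span_image, span_eq] at hy
  obtain ⟨k, hk, rfl⟩ := hy
  refine ⟨z, nonZeroDivisors.coe_ne_zero z, k, hk, ?_⟩
  rw [← Int.cast_smul_eq_zsmul ℚ, smul_smul, ← eq_intCast (algebraMap ℤ ℚ), mul_comm,
    IsLocalization.mk'_spec, map_one, one_smul]

theorem mem_of_zsmul_mem {W : Submodule ℚ V} {n : ℤ} (hn : n ≠ 0) {v : V} (hv : n • v ∈ W) :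
    v ∈ W := by
  rwa [← Int.cast_smul_eq_zsmul ℚ, smul_mem_iff _ (Int.cast_ne_zero.mpr hn)] at hv

theorem gc_span_image_comap :
    GaloisConnection (fun K : Submodule ℤ M ↦ span ℚ (f '' K))
      (fun W : Submodule ℚ V ↦ (W.restrictScalars ℤ).comap f) := fun K W ↦ by
  rw [span_le, Set.image_subset_iff]
  rfl

theorem span_image_sup (K L : Submodule ℤ M) :
    span ℚ (f '' (K ⊔ L : Submodule ℤ M)) = span ℚ (f '' K) ⊔ span ℚ (f '' L) :=
  (gc_span_image_comap f).l_sup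

variable {f}

theorem primClosure_eq_comap_span_image (hf : Function.Injective f) (K : Submodule ℤ M) :
    primClosure K = ((span ℚ (f '' K)).restrictScalars ℤ).comap f := by
  ext x
  constructor
  · rintro ⟨n, hn, hnx⟩
    rw [mem_comap, restrictScalars_mem]
    refine mem_of_zsmul_mem hn ?_
    rw [← map_zsmul]
    exact subset_span ⟨_, hnx, rfl⟩
  · intro hx
    obtain ⟨n, hn, k, hk, hfk⟩ := exists_zsmul_eq_of_mem_span_image f hx
    rw [← map_zsmul] at hfk
    exact ⟨n, hn, hf hfk ▸ hk⟩

theorem span_image_inf (hf : Function.Injective f) (K L : Submodule ℤ M) :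
    span ℚ (f '' (K ⊓ L : Submodule ℤ M)) = span ℚ (f '' K) ⊓ span ℚ (f '' L) := by
  refine le_antisymm ((gc_span_image_comap f).monotone_l.map_inf_le K L) fun v ⟨hK, hL⟩ ↦ ?_
  obtain ⟨n, hn, k, hk, hfk⟩ := exists_zsmul_eq_of_mem_span_image f hK
  obtain ⟨m, hm, l, hl, hfl⟩ := exists_zsmul_eq_of_mem_span_image f hL
  have hkl : m • k = n • l := hf (by rw [map_zsmul, map_zsmul, hfk, hfl, smul_comm])
  refine mem_of_zsmul_mem (mul_ne_zero hm hn) (subset_span ⟨m • k, ?_, ?_⟩)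
  · exact ⟨K.smul_mem m hk, hkl ▸ L.smul_mem n hl⟩
  · rw [map_zsmul, hfk, smul_smul]

variable {B : M →ₗ[ℤ] M →ₗ[ℤ] ℤ} {Bq : V →ₗ[ℚ] V →ₗ[ℚ] ℚ}
  (hBq : ∀ x y, Bq (f x) (f y) = B x y)
include hBq

theorem map_mem_orthogonalBilin_span_image_iff {U : Submodule ℤ M} {x : M} :
    f x ∈ (span ℚ (f '' U)).orthogonalBilin Bq.flip ↔ x ∈ U.orthogonalBilin B.flip := by
  constructor
  · intro hx u hu
    rw [LinearMap.flip_apply, ← Int.cast_eq_zero (α := ℚ), ← hBq]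
    exact hx _ (subset_span ⟨u, hu, rfl⟩)
  · intro hx u hu
    have : f '' U ⊆ LinearMap.ker (Bq (f x)) := by
      rintro _ ⟨u, hu, rfl⟩
      simp [hBq, show B x u = 0 from hx u hu]
    exact span_le.mpr this hu

theorem orthogonalBilin_eq_comap (U : Submodule ℤ M) :
    U.orthogonalBilin B.flip =
      (((span ℚ (f '' U)).orthogonalBilin Bq.flip).restrictScalars ℤ).comap f := by
  ext x
  exact (map_mem_orthogonalBilin_span_image_iff hBq).symm

variable (hden : ∀ v, ∃ n : ℤ, n ≠ 0 ∧ ∃ x, f x = n • v)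
include hden

theorem span_image_orthogonalBilin (U : Submodule ℤ M) :
    span ℚ (f '' U.orthogonalBilin B.flip) = (span ℚ (f '' U)).orthogonalBilin Bq.flip := by
  refine le_antisymm (span_le.mpr ?_) fun p hp ↦ ?_
  · rintro _ ⟨x, hx, rfl⟩
    exact (map_mem_orthogonalBilin_span_image_iff hBq).mpr hx
  · obtain ⟨n, hn, x, hx⟩ := hden p
    have hx' : x ∈ U.orthogonalBilin B.flip := by
      rw [← map_mem_orthogonalBilin_span_image_iff hBq, hx]
      exact zsmul_mem hp n
    exact mem_of_zsmul_mem hn (hx ▸ subset_span ⟨x, hx', rfl⟩)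

theorem separatingLeft_of_separatingLeft_restrict (hB : B.SeparatingLeft) : Bq.SeparatingLeft := by
  intro p hp
  obtain ⟨n, hn, x, hx⟩ := hden p
  have hx0 : x = 0 := hB x fun y ↦ by
    rw [← Int.cast_eq_zero (α := ℚ), ← hBq, hx, map_zsmul, LinearMap.smul_apply, hp, smul_zero]
  rw [hx0, map_zero, ← Int.cast_smul_eq_zsmul ℚ] at hx
  exact (smul_eq_zero.mp hx.symm).resolve_left (Int.cast_ne_zero.mpr hn)

end RationalSpan

section Coordinates

variable {M : Type} [AddCommGroup M] {ι : Type} (b : Module.Basis ι ℤ M)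

noncomputable def ratCoord : M →ₗ[ℤ] ι → ℚ :=
  LinearMap.pi fun i ↦ Algebra.linearMap ℤ ℚ ∘ₗ b.coord i

@[simp]
theorem ratCoord_apply (x : M) (i : ι) : ratCoord b x i = b.repr x i :=
  rfl

theorem ratCoord_injective : Function.Injective (ratCoord b) := fun x y h ↦
  b.ext_elem fun i ↦ by simpa using congrFun h i

theorem exists_ratCoord_eq_zsmul [Finite ι] (v : ι → ℚ) :
    ∃ n : ℤ, n ≠ 0 ∧ ∃ x, ratCoord b x = n • v := by
  obtain ⟨⟨n, hn⟩, hv⟩ := IsLocalization.exist_integer_multiples_of_finite (nonZeroDivisors ℤ) v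
  choose c hc using hv
  refine ⟨n, nonZeroDivisors.ne_zero hn, b.equivFun.symm c, funext fun i ↦ ?_⟩
  rw [ratCoord_apply, ← b.equivFun_apply, LinearEquiv.apply_symm_apply,
    ← eq_intCast (algebraMap ℤ ℚ), hc]
  rfl

noncomputable def ratForm [Fintype ι] [DecidableEq ι] (B : M →ₗ[ℤ] M →ₗ[ℤ] ℤ) :
    (ι → ℚ) →ₗ[ℚ] (ι → ℚ) →ₗ[ℚ] ℚ :=
  Matrix.toLinearMap₂' ℚ ((LinearMap.toMatrix₂ b b B).map (Int.cast : ℤ → ℚ))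

theorem ratForm_ratCoord [Fintype ι] [DecidableEq ι] (B : M →ₗ[ℤ] M →ₗ[ℤ] ℤ) (x y : M) :
    ratForm b B (ratCoord b x) (ratCoord b y) = B x y := by
  rw [ratForm, Matrix.toLinearMap₂'_apply, ← LinearMap.sum_repr_mul_repr_mul b b]
  simp [Finsupp.sum_fintype]

end Coordinates

theorem orthogonalBilin_inf_eq_primClosure {M : Type} [AddCommGroup M] [Module.Free ℤ M]
    [Module.Finite ℤ M] {B : M →ₗ[ℤ] M →ₗ[ℤ] ℤ} (hB : B.SeparatingLeft) (U₁ U₂ : Submodule ℤ M) :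
    (U₁ ⊓ U₂).orthogonalBilin B.flip =
      primClosure (U₁.orthogonalBilin B.flip ⊔ U₂.orthogonalBilin B.flip) := by
  classical
  let b := Module.Free.chooseBasis ℤ M
  have hf := ratCoord_injective b
  have hBq := ratForm_ratCoord b B
  have hden := exists_ratCoord_eq_zsmul b
  rw [primClosure_eq_comap_span_image hf, span_image_sup,
    span_image_orthogonalBilin hBq hden, span_image_orthogonalBilin hBq hden,
    ← orthogonalBilin_flip_inf (separatingLeft_of_separatingLeft_restrict hBq hden hB),
    ← span_image_inf hf, orthogonalBilin_eq_comap hBq]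

theorem statement8_general {M : Type} [AddCommGroup M]
    [Module.Free ℤ M] [Module.Finite ℤ M]
    (B : M →ₗ[ℤ] M →ₗ[ℤ] ℤ)
    (hBnd : ∀ x, (∀ y, B x y = 0) → x = 0)
    (A₁ A₂ : Subgroup (M ≃ₗ[ℤ] M)) :
    coinvariants B (A₁ ⊔ A₂) = primClosure (coinvariants B A₁ ⊔ coinvariants B A₂) := by
  simp only [coinvariants_eq_orthogonalBilin, invariants_sup]
  exact orthogonalBilin_inf_eq_primClosure hBnd _ _

/-- Let `N` be a lattice, `A₁, A₂ ≤ O(N)`, and `A = ⟨A₁, A₂⟩`.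
Then `N_A = [N_{A₁} + N_{A₂}]_pr`. -/
theorem statement8 {M : Type} [AddCommGroup M]
    [Module.Free ℤ M] [Module.Finite ℤ M]
    (B : M →ₗ[ℤ] M →ₗ[ℤ] ℤ)
    (hBsymm : ∀ x y, B x y = B y x) (hBnd : ∀ x, (∀ y, B x y = 0) → x = 0)
    (A₁ A₂ : Subgroup (M ≃ₗ[ℤ] M))
    (hA₁ : ∀ a ∈ A₁, ∀ x y, B (a x) (a y) = B x y)
    (hA₂ : ∀ a ∈ A₂, ∀ x y, B (a x) (a y) = B x y) :
    coinvariants B (A₁ ⊔ A₂) = primClosure (coinvariants B A₁ ⊔ coinvariants B A₂) :=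
  statement8_general B hBnd A₁ A₂
end

section
/- Let N be a lattice and let A = ⟨g₁, …, gₙ⟩ be the subgroup of the isometry group O(N) generated by isometries g₁, …, gₙ. Then the coinvariant sublattice N_A equals the primitive closure [N_{⟨g₁⟩} + ⋯ + N_{⟨gₙ⟩}]_pr of the sublattice generated by the coinvariant sublattices N_{⟨gᵢ⟩} of the cyclic subgroups ⟨gᵢ⟩. -/
theorem LinearMap.exists_smul_mem_range_of_injective {R M N : Type*} [CommRing R] [IsDomain R]
    [AddCommGroup M] [Module R M] [AddCommGroup N] [Module R N] [Module.Finite R N]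
    (f : M →ₗ[R] N) (hf : Function.Injective f) (h : Module.finrank R M = Module.finrank R N)
    (y : N) : ∃ a : R, a ≠ 0 ∧ a • y ∈ LinearMap.range f := by
  have hquot : Module.finrank R (N ⧸ LinearMap.range f) = 0 := by
    have := (LinearMap.range f).finrank_quotient_add_finrank
    rw [LinearMap.finrank_range_of_inj hf, h] at this
    omega
  obtain ⟨a, ha, hay⟩ := Module.finrank_eq_zero_iff.mp hquot (Submodule.Quotient.mk y)
  exact ⟨a, ha, (Submodule.Quotient.mk_eq_zero _).mp (by rwa [Submodule.Quotient.mk_smul])⟩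

section PrimClosure

variable {M : Type} [AddCommGroup M]

theorem le_primClosure (K : Submodule ℤ M) : K ≤ primClosure K :=
  fun x hx => ⟨1, one_ne_zero, by rwa [one_smul]⟩

instance (K : Submodule ℤ M) : Module.IsTorsionFree ℤ (M ⧸ primClosure K) := by
  refine Module.IsTorsionFree.of_smul_eq_zero fun c x hcx => ?_
  induction x using Submodule.Quotient.induction_on with | H x => ?_
  rw [← Submodule.Quotient.mk_smul, Submodule.Quotient.mk_eq_zero] at hcx
  rw [Submodule.Quotient.mk_eq_zero]
  by_cases hc : c = 0
  · exact .inl hc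
  obtain ⟨k, hk, hkx⟩ := hcx
  exact .inr ⟨k * c, mul_ne_zero hk hc, by rwa [mul_smul]⟩

theorem exists_le_ker_apply_ne_zero_of_notMem_primClosure [Module.Finite ℤ M]
    {K : Submodule ℤ M} {x : M} (hx : x ∉ primClosure K) :
    ∃ f : Module.Dual ℤ M, K ≤ LinearMap.ker f ∧ f x ≠ 0 := by
  have hx' : Submodule.Quotient.mk (p := primClosure K) x ≠ 0 := by
    rwa [ne_eq, Submodule.Quotient.mk_eq_zero]
  obtain ⟨f, hf⟩ := Module.Projective.exists_dual_ne_zero ℤ hx'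
  refine ⟨f ∘ₗ (primClosure K).mkQ, fun t ht => ?_, hf⟩
  simp [(Submodule.Quotient.mk_eq_zero _).mpr (le_primClosure K ht)]

theorem orthogonal_flip_orthogonal_le_primClosure [Module.Free ℤ M] [Module.Finite ℤ M]
    (B : LinearMap.BilinForm ℤ M) (hB : Function.Injective B) (K : Submodule ℤ M) :
    B.orthogonal (B.flip.orthogonal K) ≤ primClosure K := by
  intro x hx
  by_contra hxK
  obtain ⟨f, hfK, hfx⟩ := exists_le_ker_apply_ne_zero_of_notMem_primClosure hxK
  obtain ⟨a, ha, u, hu⟩ := B.exists_smul_mem_range_of_injective hB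
    (Module.Free.chooseBasis ℤ M).toDualEquiv.finrank_eq f
  have huK : u ∈ B.flip.orthogonal K := fun t ht => by simp [hu, LinearMap.mem_ker.mp (hfK ht)]
  have := hx u huK
  simp [hu, ha, hfx] at this

end PrimClosure

section Isometries

variable {M : Type} [AddCommGroup M]

theorem mem_invariants_closure_iff {S : Set (M ≃ₗ[ℤ] M)} {x : M} :
    x ∈ invariants (Subgroup.closure S) ↔ ∀ g ∈ S, g x = x :=
  Subgroup.closure_le (MulAction.stabilizer (M ≃ₗ[ℤ] M) x)

theorem invariants_antitone : Antitone (invariants (M := M)) :=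
  fun _ _ hAA' _ hx g hg => hx g (hAA' hg)

variable (B : M →ₗ[ℤ] M →ₗ[ℤ] ℤ)

theorem coinvariants_mono : Monotone (coinvariants B) :=
  fun _ _ hAA' _ hx v hv => hx v (invariants_antitone hAA' hv)

theorem primClosure_le_coinvariants {A : Subgroup (M ≃ₗ[ℤ] M)} {K : Submodule ℤ M}
    (hK : K ≤ coinvariants B A) : primClosure K ≤ coinvariants B A := by
  rintro x ⟨c, hc, hcx⟩ v hv
  have := hK hcx v hv
  rw [map_smul, LinearMap.smul_apply, smul_eq_mul] at this
  exact (mul_eq_zero.mp this).resolve_left hc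

variable {B} {g : M ≃ₗ[ℤ] M}

theorem sub_apply_mem_coinvariants (hg : ∀ x y, B (g x) (g y) = B x y)
    {A : Subgroup (M ≃ₗ[ℤ] M)} (hgA : g ∈ A) (y : M) : y - g y ∈ coinvariants B A := by
  intro v hv
  rw [map_sub, LinearMap.sub_apply, sub_eq_zero, ← hg y v, hv g hgA]

theorem apply_eq_self_of_forall_sub_apply (hg : ∀ x y, B (g x) (g y) = B x y)
    (hB : Function.Injective B) {u : M} (hu : ∀ y, B u (y - g y) = 0) : g u = u := by
  have : g.symm u = u := hB <| LinearMap.ext fun y => by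
    rw [← hg, LinearEquiv.apply_symm_apply, eq_comm, ← sub_eq_zero, ← map_sub, hu]
  rw [← this, LinearEquiv.apply_symm_apply, this]

end Isometries

/-- Let `N` be a lattice and `A = ⟨g₁, …, gₙ⟩ ≤ O(N)` generated by
isometries `g₁, …, gₙ`.  Then `N_A = [N_{⟨g₁⟩} + ⋯ + N_{⟨gₙ⟩}]_pr`. -/
theorem statement9 {M : Type} [AddCommGroup M]
    [Module.Free ℤ M] [Module.Finite ℤ M]
    (B : M →ₗ[ℤ] M →ₗ[ℤ] ℤ)
    (hBsymm : ∀ x y, B x y = B y x) (hBnd : ∀ x, (∀ y, B x y = 0) → x = 0)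
    {k : ℕ} (g : Fin k → (M ≃ₗ[ℤ] M))
    (hg : ∀ i, ∀ x y, B (g i x) (g i y) = B x y) :
    coinvariants B (Subgroup.closure (Set.range g))
      = primClosure (⨆ i, coinvariants B (Subgroup.zpowers (g i))) := by
  have hB : Function.Injective B :=
    (injective_iff_map_eq_zero B).mpr fun x hx => hBnd x (LinearMap.congr_fun hx)
  have hgA i : g i ∈ Subgroup.closure (Set.range g) := Subgroup.subset_closure ⟨i, rfl⟩
  refine le_antisymm (fun x hx => ?_) (primClosure_le_coinvariants B <| iSup_le fun i =>
    coinvariants_mono B (Subgroup.zpowers_le.mpr (hgA i)))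
  refine orthogonal_flip_orthogonal_le_primClosure B hB _ fun u hu => ?_
  have hu_inv : u ∈ invariants (Subgroup.closure (Set.range g)) := by
    refine mem_invariants_closure_iff.mpr <| Set.forall_mem_range.mpr fun i =>
      apply_eq_self_of_forall_sub_apply (hg i) hB fun y => hu _ ?_
    exact Submodule.mem_iSup_of_mem i
      (sub_apply_mem_coinvariants (hg i) (Subgroup.mem_zpowers _) y)
  exact (hBsymm u x).trans (hx u hu_inv)
end

section
/- Let N be a lattice of rank n with bilinear form B, and let A be a subgroup of its isometry group O(N). Suppose e₁, …, eₙ ∈ N form a basis of N ⊗ ℚ and that A permutes the set {e₁, …, eₙ}. Let e₁*, …, eₙ* ∈ N ⊗ ℚ be the dual basis with respect to B, i.e., B(eᵢ*, eⱼ) = δᵢⱼ. Let {e_{i₁₁}, …, e_{i₁ℓ₁}}, …, {e_{iₜ₁}, …, e_{iₜℓₜ}} be the orbits of A on {e₁, …, eₙ}, t being the number of orbits. Then the n − t vectors e_{i_{j1}}* − e_{i_{j2}}*, …, e_{i_{j(ℓⱼ−1)}}* − e_{i_{jℓⱼ}}* (for j = 1, …, t) form a basis of N_A ⊗ ℚ,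 where N_A = (N^A)^⊥ is the coinvariant sublattice. In particular, rk N_A = n − t. -/
/-!
STATEMENT 10 (a rational basis of the coinvariant sublattice from the orbits of a
permuted basis).

A lattice of rank `n` is formalized by its Gram matrix `G : Matrix (Fin n) (Fin n) ℤ`
(symmetric, nonzero determinant) with bilinear form `bilin G x y = x ⬝ᵥ G.mulVec y` on
`N = (Fin n → ℤ)`; `N ⊗ ℚ` is `Fin n → ℚ` with the `ℚ`-bilinear extension `bilinQ G`.
A subgroup of the isometry group `O(N)` is a subgroup `A` of the automorphism group of
`N` all of whose elements preserve the form.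

The vectors `e 1, …, e n ∈ N` form a basis of `N ⊗ ℚ` which is permuted by `A`; the
orbits of `A` on `{e 1, …, e n}` are enumerated by `σ : (Σ j : Fin t, Fin (d j + 1)) ≃ Fin n`
(the `j`-th orbit is `{e (σ ⟨j, 0⟩), …, e (σ ⟨j, d j⟩)}`, `t` is the number of orbits);
`f 1, …, f n ∈ N ⊗ ℚ` is the dual basis (`B(f i, e j) = δᵢⱼ`).
-/

open Matrix

/-- The bilinear form of the lattice with Gram matrix `G`. -/
def bilin {n : ℕ} (G : Matrix (Fin n) (Fin n) ℤ) (x y : Fin n → ℤ) : ℤ :=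
  x ⬝ᵥ G.mulVec y

/-- The `ℚ`-bilinear extension of the form of `G` to `N ⊗ ℚ = (Fin n → ℚ)`. -/
def bilinQ {n : ℕ} (G : Matrix (Fin n) (Fin n) ℤ) (x y : Fin n → ℚ) : ℚ :=
  x ⬝ᵥ (G.map (Int.cast : ℤ → ℚ)).mulVec y

/-- The canonical inclusion `N = ℤⁿ ⊆ N ⊗ ℚ = ℚⁿ`. -/
def castVec {n : ℕ} (v : Fin n → ℤ) : Fin n → ℚ :=
  fun i => (v i : ℚ)

/-- The coinvariant sublattice `N_A = (N^A)^⊥`. -/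
def coinv {n : ℕ} (G : Matrix (Fin n) (Fin n) ℤ)
    (A : Subgroup ((Fin n → ℤ) ≃ₗ[ℤ] (Fin n → ℤ))) : Submodule ℤ (Fin n → ℤ) where
  carrier := {x | ∀ v : Fin n → ℤ, (∀ g ∈ A, g v = v) → bilin G x v = 0}
  add_mem' := by
    intro a b ha hb v hv
    have h1 := ha v hv
    have h2 := hb v hv
    simp only [bilin, add_dotProduct] at *
    omega
  zero_mem' := by
    intro v hv
    simp [bilin]
  smul_mem' := by
    intro c x hx v hv
    have h := hx v hv
    simp only [bilin, smul_dotProduct, smul_eq_mul] at *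
    rw [h, mul_zero]

/-- The family of differences `e*_{i_{j,k}} − e*_{i_{j,k+1}}` of consecutive dual basis
vectors within each orbit. -/
def diffFam {n t : ℕ} (f : Fin n → (Fin n → ℚ)) (d : Fin t → ℕ)
    (σ : (Σ j : Fin t, Fin (d j + 1)) ≃ Fin n) :
    (Σ j : Fin t, Fin (d j)) → (Fin n → ℚ) :=
  fun p => f (σ ⟨p.1, p.2.castSucc⟩) - f (σ ⟨p.1, p.2.succ⟩)

/-!
Let `s_j ∈ N` be the sum of the `j`-th orbit. An `A`-invariant vector has coordinates (in the
basis `e`) that are constant along orbits, so `N^A ⊗ ℚ` is spanned by `s_1, …, s_t` and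
`N_A ⊗ ℚ` is the kernel `W` of `x ↦ (B(x, s_j))_j`. As `B(e*_i, s_j)` is `1` or `0` according
as `e_i` lies in the `j`-th orbit or not, this map is onto `ℚ^t` and kills the differences, so
`dim W = n - t`. The differences are independent because they pair with the partial orbit sums
`e_{i_{j1}} + ⋯ + e_{i_{jk}}` to the identity matrix. Finally `rk N_A = dim (N_A ⊗ ℚ)` because
`ℚⁿ` is the localization of `ℤⁿ` at the nonzero integers.
-/

theorem LinearIndependent.of_pairing {ι R M : Type*} [Semiring R] [AddCommMonoid M] [Module R M]
    [DecidableEq ι] {b : ι → M} (φ : ι → M →ₗ[R] R)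
    (h : ∀ p q, φ q (b p) = if p = q then 1 else 0) : LinearIndependent R b := by
  refine LinearIndependent.of_comp (LinearMap.pi φ) ?_
  have hcomp : LinearMap.pi φ ∘ b = fun p => Pi.single p 1 := by
    ext p q
    simp [h, Pi.single_apply, eq_comm]
  rw [hcomp]
  exact Pi.linearIndependent_single_one ι R

theorem AddMonoidHom.map_sum_eq_self_of_forall_exists {P M : Type*} [AddCommMonoid M] {v : P → M}
    (hv : Function.Injective v) {g : M →+ M} (hg : Function.Injective g) {s : Finset P}
    (hs : ∀ p ∈ s, ∃ p' ∈ s, g (v p) = v p') : g (∑ p ∈ s, v p) = ∑ p ∈ s, v p := by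
  classical
  have himage : (s.image v).image g = s.image v := by
    refine Finset.eq_of_subset_of_card_le ?_ (Finset.card_image_of_injective _ hg).ge
    simp only [Finset.image_image, Finset.image_subset_iff, Function.comp_apply]
    intro p hp
    obtain ⟨p', hp', hgp⟩ := hs p hp
    exact hgp ▸ Finset.mem_image_of_mem v hp'
  calc g (∑ p ∈ s, v p) = ∑ x ∈ (s.image v).image g, x := by
        rw [Finset.sum_image hg.injOn, Finset.sum_image hv.injOn, map_sum]
    _ = ∑ p ∈ s, v p := by rw [himage, Finset.sum_image hv.injOn]

theorem Module.Basis.repr_apply_eq_of_map_basis {ι K V : Type*} [Fintype ι] [DecidableEq ι]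
    [Field K] [AddCommGroup V] [Module K V] (b : Module.Basis ι K V) {T : V →ₗ[K] V}
    {π : ι → ι} (hπ : Function.Injective π) (hT : ∀ i, T (b i) = b (π i)) {v : V}
    (hv : T v = v) (i : ι) : b.repr v (π i) = b.repr v i := by
  have hTv : T v = ∑ j, b.repr v j • b (π j) := by
    conv_lhs => rw [← b.sum_repr v]
    simp only [map_sum, map_smul, hT]
  calc b.repr v (π i) = b.repr (T v) (π i) := by rw [hv]
    _ = b.repr v i := by simp [hTv, Finsupp.single_apply, hπ.eq_iff]

section Lattice

variable {n t : ℕ}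

def castLin : (Fin n → ℤ) →ₗ[ℤ] (Fin n → ℚ) :=
  LinearMap.pi fun i => Algebra.linearMap ℤ ℚ ∘ₗ LinearMap.proj i

@[simp] theorem castLin_apply (v : Fin n → ℤ) : castLin v = castVec v := rfl

instance : IsLocalizedModule (nonZeroDivisors ℤ) (castLin (n := n)) :=
  IsLocalizedModule.pi _ _

theorem span_castVec_image_comap (W : Submodule ℚ (Fin n → ℚ)) :
    Submodule.span ℚ (castVec '' ((W.restrictScalars ℤ).comap castLin : Set (Fin n → ℤ)))
      = W := by
  conv_rhs => rw [← (Submodule.localized'gi ℚ (nonZeroDivisors ℤ) castLin).l_u_eq W,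
    Submodule.localized'_eq_span]
  rfl

theorem finrank_span_castVec_image (L : Submodule ℤ (Fin n → ℤ)) :
    Module.finrank ℚ (Submodule.span ℚ (castVec '' (L : Set (Fin n → ℤ))))
      = Module.finrank ℤ L := by
  have hloc := IsLocalizedModule.finrank_eq (nonZeroDivisors ℤ)
    (L.toLocalized' ℚ (nonZeroDivisors ℤ) castLin) le_rfl
  rw [← hloc, ← IsLocalization.finrank_eq ℚ (nonZeroDivisors ℤ) le_rfl,
    Submodule.localized'_eq_span]
  rfl

noncomputable def ratExtension (g : (Fin n → ℤ) →ₗ[ℤ] (Fin n → ℤ)) :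
    (Fin n → ℚ) →ₗ[ℚ] (Fin n → ℚ) :=
  (IsLocalizedModule.map (nonZeroDivisors ℤ) castLin castLin g).extendScalarsOfIsLocalization
    (nonZeroDivisors ℤ) ℚ

@[simp] theorem ratExtension_castVec (g : (Fin n → ℤ) →ₗ[ℤ] (Fin n → ℤ)) (w : Fin n → ℤ) :
    ratExtension g (castVec w) = castVec (g w) :=
  IsLocalizedModule.map_apply _ castLin castLin g w

noncomputable def formQ (G : Matrix (Fin n) (Fin n) ℤ) : LinearMap.BilinForm ℚ (Fin n → ℚ) :=
  Matrix.toLinearMap₂' ℚ (G.map (Int.cast : ℤ → ℚ))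

@[simp] theorem formQ_apply (G : Matrix (Fin n) (Fin n) ℤ) (x y : Fin n → ℚ) :
    formQ G x y = bilinQ G x y :=
  Matrix.toLinearMap₂'_apply' _ _ _

theorem bilinQ_castVec (G : Matrix (Fin n) (Fin n) ℤ) (x y : Fin n → ℤ) :
    bilinQ G (castVec x) (castVec y) = bilin G x y := by
  simp [bilinQ, bilin, castVec, dotProduct, mulVec]

variable {d : Fin t → ℕ}

def orbitSum (e : Fin n → Fin n → ℤ) (σ : (Σ j : Fin t, Fin (d j + 1)) ≃ Fin n) (j : Fin t) :
    Fin n → ℤ :=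
  ∑ p with p.1 = j, e (σ p)

noncomputable def orbitPairing (G : Matrix (Fin n) (Fin n) ℤ) (e : Fin n → Fin n → ℤ)
    (σ : (Σ j : Fin t, Fin (d j + 1)) ≃ Fin n) : (Fin n → ℚ) →ₗ[ℚ] (Fin t → ℚ) :=
  LinearMap.pi fun j => (formQ G).flip (castVec (orbitSum e σ j))

theorem orbitPairing_apply (G : Matrix (Fin n) (Fin n) ℤ) (e : Fin n → Fin n → ℤ)
    (σ : (Σ j : Fin t, Fin (d j + 1)) ≃ Fin n) (x : Fin n → ℚ) (j : Fin t) :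
    orbitPairing G e σ x j = bilinQ G x (castVec (orbitSum e σ j)) := by
  simp [orbitPairing]

theorem castVec_orbitSum (e : Fin n → Fin n → ℤ) (σ : (Σ j : Fin t, Fin (d j + 1)) ≃ Fin n)
    (j : Fin t) : castVec (orbitSum e σ j) = ∑ p with p.1 = j, castVec (e (σ p)) := by
  simp only [orbitSum, ← castLin_apply, map_sum]

def IsDualFamily (G : Matrix (Fin n) (Fin n) ℤ) (e : Fin n → Fin n → ℤ)
    (f : Fin n → Fin n → ℚ) : Prop :=
  ∀ i j, bilinQ G (f i) (castVec (e j)) = if i = j then 1 else 0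

structure IsOrbitEnumeration (A : Subgroup ((Fin n → ℤ) ≃ₗ[ℤ] (Fin n → ℤ)))
    (e : Fin n → Fin n → ℤ) (σ : (Σ j : Fin t, Fin (d j + 1)) ≃ Fin n) : Prop where
  permutes : ∀ g ∈ A, ∀ i, ∃ j, g (e i) = e j
  exists_map_iff : ∀ (j j' : Fin t) (k : Fin (d j + 1)) (k' : Fin (d j' + 1)),
    (∃ g ∈ A, g (e (σ ⟨j, k⟩)) = e (σ ⟨j', k'⟩)) ↔ j = j'

variable {G : Matrix (Fin n) (Fin n) ℤ} {e : Fin n → Fin n → ℤ} {f : Fin n → Fin n → ℚ}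
  {σ : (Σ j : Fin t, Fin (d j + 1)) ≃ Fin n}

theorem bilinQ_dual_sum
    (hdual : IsDualFamily G e f)
    (p : Σ j : Fin t, Fin (d j + 1)) (s : Finset (Σ j : Fin t, Fin (d j + 1))) :
    bilinQ G (f (σ p)) (∑ p' ∈ s, castVec (e (σ p'))) = if p ∈ s then 1 else 0 := by
  rw [← formQ_apply, map_sum]
  simp [hdual (σ p), σ.injective.eq_iff]

theorem orbitPairing_dual
    (hdual : IsDualFamily G e f)
    (p : Σ j : Fin t, Fin (d j + 1)) :
    orbitPairing G e σ (f (σ p)) = Pi.single p.1 1 := by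
  ext j
  rw [orbitPairing_apply, castVec_orbitSum, bilinQ_dual_sum hdual]
  simp [Pi.single_apply, eq_comm]

theorem diffFam_mem_ker_orbitPairing
    (hdual : IsDualFamily G e f)
    (q : Σ j : Fin t, Fin (d j)) : diffFam f d σ q ∈ LinearMap.ker (orbitPairing G e σ) := by
  simp [diffFam, orbitPairing_dual hdual]

theorem range_orbitPairing
    (hdual : IsDualFamily G e f) :
    LinearMap.range (orbitPairing G e σ) = ⊤ := by
  rw [eq_top_iff, ← (Pi.basisFun ℚ (Fin t)).span_eq, Submodule.span_le]
  rintro _ ⟨j, rfl⟩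
  exact ⟨f (σ ⟨j, 0⟩), by simp [orbitPairing_dual hdual]⟩

theorem card_sigma_fin_eq_sub (σ : (Σ j : Fin t, Fin (d j + 1)) ≃ Fin n) :
    Fintype.card (Σ j : Fin t, Fin (d j)) = n - t := by
  have h := Fintype.card_congr σ
  simp only [Fintype.card_sigma, Fintype.card_fin, Finset.sum_add_distrib] at h ⊢
  simp at h
  omega

theorem finrank_ker_orbitPairing
    (hdual : IsDualFamily G e f) :
    Module.finrank ℚ (LinearMap.ker (orbitPairing G e σ)) = n - t := by
  have h := LinearMap.finrank_range_add_finrank_ker (orbitPairing G e σ)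
  rw [range_orbitPairing hdual, finrank_top] at h
  simp only [Module.finrank_fin_fun] at h
  omega

theorem linearIndependent_diffFam
    (hdual : IsDualFamily G e f) :
    LinearIndependent ℚ (diffFam f d σ) := by
  let u (q : Σ j : Fin t, Fin (d j)) : Fin n → ℚ :=
    ∑ p with p.1 = q.1 ∧ p.2.val ≤ q.2.val, castVec (e (σ p))
  refine LinearIndependent.of_pairing (fun q => (formQ G).flip (u q)) fun p q => ?_
  change formQ G (diffFam f d σ p) (u q) = _
  rw [diffFam, map_sub, LinearMap.sub_apply, formQ_apply, formQ_apply,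
    bilinQ_dual_sum hdual, bilinQ_dual_sum hdual]
  obtain ⟨a, k⟩ := p
  obtain ⟨c, k'⟩ := q
  by_cases h : a = c
  · subst h
    simp only [Finset.mem_filter, Finset.mem_univ, true_and, Fin.val_castSucc, Fin.val_succ,
      Sigma.mk.inj_iff, heq_eq_eq, Fin.ext_iff]
    split_ifs <;> first | omega | norm_num
  · simp [h]

theorem span_diffFam_eq_ker_orbitPairing
    (hdual : IsDualFamily G e f) :
    Submodule.span ℚ (Set.range (diffFam f d σ)) = LinearMap.ker (orbitPairing G e σ) := by
  refine Submodule.eq_of_le_of_finrank_le ?_ ?_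
  · rw [Submodule.span_le]
    rintro _ ⟨q, rfl⟩
    exact diffFam_mem_ker_orbitPairing hdual q
  · rw [finrank_ker_orbitPairing hdual, finrank_span_eq_card (linearIndependent_diffFam hdual),
      card_sigma_fin_eq_sub σ]

variable {A : Subgroup ((Fin n → ℤ) ≃ₗ[ℤ] (Fin n → ℤ))}

theorem orbitSum_invariant (he : Function.Injective e)
    (hA : IsOrbitEnumeration A e σ)
    {g : (Fin n → ℤ) ≃ₗ[ℤ] (Fin n → ℤ)} (hg : g ∈ A) (j : Fin t) :
    g (orbitSum e σ j) = orbitSum e σ j := by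
  refine AddMonoidHom.map_sum_eq_self_of_forall_exists (he.comp σ.injective)
    (g := g.toAddMonoidHom) g.injective ?_
  rintro ⟨a, k⟩ hp
  obtain ⟨m, hm⟩ := hA.permutes g hg (σ ⟨a, k⟩)
  obtain ⟨⟨b, k'⟩, rfl⟩ := σ.surjective m
  have hab : a = b := (hA.exists_map_iff a b k k').1 ⟨g, hg, hm⟩
  simp only [Finset.mem_filter, Finset.mem_univ, true_and] at hp ⊢
  exact ⟨⟨b, k'⟩, hab ▸ hp, hm⟩

theorem castVec_mem_span_orbitSum
    (heIndep : LinearIndependent ℚ fun i => castVec (e i))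
    (heSpan : Submodule.span ℚ (Set.range fun i => castVec (e i)) = ⊤)
    (hA : IsOrbitEnumeration A e σ)
    {v : Fin n → ℤ} (hv : ∀ g ∈ A, g v = v) :
    castVec v ∈ Submodule.span ℚ (Set.range fun j => castVec (orbitSum e σ j)) := by
  have he : Function.Injective e := fun i j h => heIndep.injective (congrArg castVec h)
  let b := (Module.Basis.mk heIndep heSpan.ge).reindex σ.symm
  have hb : ∀ p, b p = castVec (e (σ p)) := by simp [b]
  set c := b.repr (castVec v)
  have hconst : ∀ p, c p = c ⟨p.1, 0⟩ := by
    intro p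
    obtain ⟨g, hg, hgp⟩ := (hA.exists_map_iff p.1 p.1 0 p.2).2 rfl
    choose π hπ using fun q => hA.permutes g hg (σ q)
    have hπinj : Function.Injective (σ.symm ∘ π) := fun q q' h =>
      σ.injective (he (g.injective (by rw [hπ, hπ, σ.symm.injective h])))
    have hT : ∀ q, ratExtension g.toLinearMap (b q) = b (σ.symm (π q)) := by simp [hb, hπ]
    have hπp : σ.symm (π ⟨p.1, 0⟩) = p := σ.symm_apply_eq.2 (he (by rw [← hπ, hgp]))
    calc c p = c (σ.symm (π ⟨p.1, 0⟩)) := by rw [hπp]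
      _ = c ⟨p.1, 0⟩ := b.repr_apply_eq_of_map_basis hπinj hT
        (by rw [ratExtension_castVec]; exact congrArg castVec (hv g hg)) _
  have hsum : castVec v = ∑ j, c ⟨j, 0⟩ • castVec (orbitSum e σ j) := by
    calc castVec v = ∑ j, ∑ p with p.1 = j, c p • b p := by
          rw [Finset.sum_fiberwise, b.sum_repr]
      _ = ∑ j, c ⟨j, 0⟩ • castVec (orbitSum e σ j) := by
          simp only [castVec_orbitSum, Finset.smul_sum]
          refine Finset.sum_congr rfl fun j _ => Finset.sum_congr rfl fun p hp => ?_
          rw [hconst, hb, (Finset.mem_filter.1 hp).2]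
  rw [hsum]
  exact Submodule.sum_mem _ fun j _ => Submodule.smul_mem _ _ (Submodule.subset_span ⟨j, rfl⟩)

theorem span_castVec_coinv
    (heIndep : LinearIndependent ℚ fun i => castVec (e i))
    (heSpan : Submodule.span ℚ (Set.range fun i => castVec (e i)) = ⊤)
    (hA : IsOrbitEnumeration A e σ) :
    Submodule.span ℚ (castVec '' (coinv G A : Set (Fin n → ℤ)))
      = LinearMap.ker (orbitPairing G e σ) := by
  have he : Function.Injective e := fun i j h => heIndep.injective (congrArg castVec h)
  suffices hcoinv :
      coinv G A = ((LinearMap.ker (orbitPairing G e σ)).restrictScalars ℤ).comap castLin by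
    rw [hcoinv, span_castVec_image_comap]
  ext z
  simp only [Submodule.mem_comap, Submodule.restrictScalars_mem, castLin_apply, LinearMap.mem_ker]
  constructor
  · intro hz
    ext j
    rw [orbitPairing_apply, bilinQ_castVec, hz _ fun g hg => orbitSum_invariant he hA hg j]
    rfl
  · intro hz v hv
    have hspan : Submodule.span ℚ (Set.range fun j => castVec (orbitSum e σ j))
        ≤ LinearMap.ker (formQ G (castVec z)) := by
      rw [Submodule.span_le]
      rintro _ ⟨j, rfl⟩
      simpa [orbitPairing_apply] using congr_fun hz j
    have h := hspan (castVec_mem_span_orbitSum heIndep heSpan hA hv)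
    rw [LinearMap.mem_ker, formQ_apply, bilinQ_castVec] at h
    exact_mod_cast h

end Lattice

theorem statement10_general {n t : ℕ} (G : Matrix (Fin n) (Fin n) ℤ)
    (A : Subgroup ((Fin n → ℤ) ≃ₗ[ℤ] (Fin n → ℤ)))
    (e : Fin n → (Fin n → ℤ))
    (heIndep : LinearIndependent ℚ fun i => castVec (e i))
    (heSpan : Submodule.span ℚ (Set.range fun i => castVec (e i)) = ⊤)
    (hperm : ∀ g ∈ A, ∀ i : Fin n, ∃ j : Fin n, g (e i) = e j)
    (f : Fin n → (Fin n → ℚ))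
    (hdual : ∀ i j : Fin n, bilinQ G (f i) (castVec (e j)) = if i = j then 1 else 0)
    (d : Fin t → ℕ) (σ : (Σ j : Fin t, Fin (d j + 1)) ≃ Fin n)
    (horb : ∀ (j j' : Fin t) (k : Fin (d j + 1)) (k' : Fin (d j' + 1)),
      (∃ g ∈ A, g (e (σ ⟨j, k⟩)) = e (σ ⟨j', k'⟩)) ↔ j = j') :
    LinearIndependent ℚ (diffFam f d σ) ∧
    Submodule.span ℚ (Set.range (diffFam f d σ))
      = Submodule.span ℚ (castVec '' (coinv G A : Set (Fin n → ℤ))) ∧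
    Module.finrank ℤ (coinv G A) = n - t := by
  have hcoinv := span_castVec_coinv (G := G) heIndep heSpan ⟨hperm, horb⟩
  refine ⟨linearIndependent_diffFam hdual, ?_, ?_⟩
  · rw [span_diffFam_eq_ker_orbitPairing hdual, hcoinv]
  · rw [← finrank_span_castVec_image, hcoinv, finrank_ker_orbitPairing hdual]

/-- Let `N` be a lattice of rank `n`, `A ≤ O(N)`, and suppose
`e 1, …, e n ∈ N` form a basis of `N ⊗ ℚ` permuted by `A`, with dual basis
`e* = f : Fin n → N ⊗ ℚ` (`B(f i, e j) = δᵢⱼ`).  Enumerate the orbits of `A` on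
`{e 1, …, e n}` by `σ` as above, with `t` orbits of sizes `d j + 1`.  Then the `n − t`
differences of consecutive dual vectors within the orbits form a basis of `N_A ⊗ ℚ`;
in particular `rk N_A = n − t`. -/
theorem statement10 {n t : ℕ} (G : Matrix (Fin n) (Fin n) ℤ)
    (hsymm : G.IsSymm) (hnd : G.det ≠ 0)
    (A : Subgroup ((Fin n → ℤ) ≃ₗ[ℤ] (Fin n → ℤ)))
    (hA : ∀ g ∈ A, ∀ x y : Fin n → ℤ, bilin G (g x) (g y) = bilin G x y)
    (e : Fin n → (Fin n → ℤ))
    (heIndep : LinearIndependent ℚ fun i => castVec (e i))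
    (heSpan : Submodule.span ℚ (Set.range fun i => castVec (e i)) = ⊤)
    (hperm : ∀ g ∈ A, ∀ i : Fin n, ∃ j : Fin n, g (e i) = e j)
    (f : Fin n → (Fin n → ℚ))
    (hdual : ∀ i j : Fin n, bilinQ G (f i) (castVec (e j)) = if i = j then 1 else 0)
    (d : Fin t → ℕ) (σ : (Σ j : Fin t, Fin (d j + 1)) ≃ Fin n)
    (horb : ∀ (j j' : Fin t) (k : Fin (d j + 1)) (k' : Fin (d j' + 1)),
      (∃ g ∈ A, g (e (σ ⟨j, k⟩)) = e (σ ⟨j', k'⟩)) ↔ j = j') :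
    LinearIndependent ℚ (diffFam f d σ) ∧
    Submodule.span ℚ (Set.range (diffFam f d σ))
      = Submodule.span ℚ (castVec '' (coinv G A : Set (Fin n → ℤ))) ∧
    Module.finrank ℤ (coinv G A) = n - t :=
  statement10_general G A e heIndep heSpan hperm f hdual d σ horb
end
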